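/- Let T be a finite rooted tree, f strictly increasing along edges oriented away from the root. Then the output of the TMD algorithm is independent of the order in which branch points are processed: for any two orderings of the branch points, the resulting multisets of intervals are equal. -/

import Mathlib

/-- A finite rooted tree, with a real number (the value of a function `f`,
e.g. a distance from the root) attached to each node. -/
inductive RTree : Type where
  | node (val : ℝ) (children : List RTree)

namespace RTree

/-- The value of `f` at the root. -/
def rootVal : RTree → ℝ
  | node x _ => x

/-- The maximal value of `f` on the subtree (under a function increasing away
from the root, this is the maximal value of `f` on the leaves). -/
def maxLeaf : RTree → ℝ
  | node x ts => ts.attach.foldr (fun c m => max (maxLeaf c.1) m) x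
  decreasing_by
    have := List.sizeOf_lt_of_mem c.2
    simp only [RTree.node.sizeOf_spec] at *
    omega

/-- `f` is strictly increasing along edges directed away from the root. -/
inductive Increasing : RTree → Prop
  | node {x ts} : (∀ c ∈ ts, x < rootVal c) → (∀ c ∈ ts, Increasing c) →
      Increasing (node x ts)

/-- The bars of the TMD algorithm other than the final bar `[f(r), L]`:
at each branch point, every detached child branch contributes a bar
`(f(branch point), max of f on the leaves of the branch]`; equivalently, each
child contributes such a candidate bar and one copy of a maximal one (the
branch that stays attached) is removed. -/
noncomputable def tmdAux : RTree → Multiset (ℝ × ℝ)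
  | node x ts =>
    (↑(ts.map fun c => (x, maxLeaf c)) - {(x, maxLeaf (node x ts))})
      + (ts.attach.map fun c => tmdAux c.1).sum
  decreasing_by
    have := List.sizeOf_lt_of_mem c.2
    simp only [RTree.node.sizeOf_spec] at *
    omega

/-- The topological morphology descriptor barcode, as a multiset of pairs
(left endpoint, right endpoint). -/
noncomputable def tmd (T : RTree) : Multiset (ℝ × ℝ) :=
  (T.rootVal, T.maxLeaf) ::ₘ T.tmdAux

/-- The multiset of values of `f` at the leaves. -/
def leafVals : RTree → Multiset ℝ
  | node x ts =>
    if ts.isEmpty then {x}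
    else (ts.attach.map fun c => leafVals c.1).sum
  decreasing_by
    have := List.sizeOf_lt_of_mem c.2
    simp only [RTree.node.sizeOf_spec] at *
    omega

end RTree

namespace RTree

noncomputable instance : DecidableEq RTree := Classical.decEq _

/-- `T` has no branch points (every node has at most one child). -/
inductive NoBranch : RTree → Prop
  | node {x ts} : ts.length ≤ 1 → (∀ c ∈ ts, NoBranch c) → NoBranch (node x ts)

/-- One detaching step of the TMD algorithm, performed at some branch point of
the first tree: `Detach T T' d` means that at a branch point (a node with at
least two children) some child branch `c` whose maximal leaf value is not
larger than that of some remaining sibling is detached, turning `T` into `T'`,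
and the detached component (the branch `c` together with the edge from the
branch point, hence rooted at the value of the branch point) is `d`. -/
inductive Detach : RTree → RTree → RTree → Prop
  | here {x ts c} (hc : c ∈ ts) (h2 : 2 ≤ ts.length)
      (hmax : ∃ c' ∈ ts.erase c, maxLeaf c ≤ maxLeaf c') :
      Detach (node x ts) (node x (ts.erase c)) (node x [c])
  | within {x ts c c' d} (hc : c ∈ ts) :
      Detach c c' d → Detach (node x ts) (node x (c' :: ts.erase c)) d

/-- One step of the TMD algorithm on a collection (multiset) of trees: a tree
in the collection is replaced by the result of detaching a child branch at one
of its branch points, and the detached component is added to the collection. -/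
inductive StepM : Multiset RTree → Multiset RTree → Prop
  | mk {T T' d S} : Detach T T' d → StepM (T ::ₘ S) (T' ::ₘ d ::ₘ S)

/-- Reflexive-transitive closure of `StepM`. -/
inductive Reaches : Multiset RTree → Multiset RTree → Prop
  | refl (S) : Reaches S S
  | step {S S' S''} : StepM S S' → Reaches S' S'' → Reaches S S''

/-- A complete run of the TMD algorithm starting from the single tree `T` and
producing the barcode `B`: detaching steps are performed, in any order and with
any tie-breaking choices, until no branch points remain; each of the resulting
branches (paths) contributes the interval from the `f`-value at its initial
point to the `f`-value at its leaf. -/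
def RunOutput (T : RTree) (B : Multiset (ℝ × ℝ)) : Prop :=
  ∃ S : Multiset RTree, Reaches {T} S ∧ (∀ u ∈ S, NoBranch u) ∧
    B = S.map fun u => (rootVal u, maxLeaf u)

end RTree

namespace RTree

lemma maxLeaf_node (x : ℝ) (ts : List RTree) :
    maxLeaf (node x ts) = ts.foldr (fun c m => max (maxLeaf c) m) x := by
  rw [maxLeaf]
  conv_rhs => rw [← List.attach_map_subtype_val ts, List.foldr_map]

lemma le_foldr_max (x : ℝ) (ts : List RTree) :
    x ≤ ts.foldr (fun c m => max (maxLeaf c) m) x := by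
  induction ts with
  | nil => simp
  | cons a l ih => exact ih.trans (le_max_right _ _)

lemma mem_le_foldr_max {c : RTree} {ts : List RTree} (h : c ∈ ts) (x : ℝ) :
    maxLeaf c ≤ ts.foldr (fun c m => max (maxLeaf c) m) x := by
  induction ts with
  | nil => cases h
  | cons a l ih =>
    rcases List.mem_cons.1 h with rfl | h
    · exact le_max_left _ _
    · exact (ih h).trans (le_max_right _ _)

lemma rootVal_le_maxLeaf (u : RTree) : rootVal u ≤ maxLeaf u := by
  cases u with
  | node x ts => rw [maxLeaf_node]; exact le_foldr_max x ts

lemma foldr_max_cases (x : ℝ) (ts : List RTree) :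
    ts.foldr (fun c m => max (maxLeaf c) m) x = x ∨
    ∃ c ∈ ts, ts.foldr (fun c m => max (maxLeaf c) m) x = maxLeaf c := by
  induction ts with
  | nil => left; rfl
  | cons a l ih =>
    rcases max_cases (maxLeaf a) (l.foldr (fun c m => max (maxLeaf c) m) x) with ⟨h1, _⟩ | ⟨h1, _⟩
    · right; exact ⟨a, List.mem_cons_self, h1⟩
    · rcases ih with h | ⟨c, hc, h⟩
      · left; rw [List.foldr_cons, h1, h]
      · right; exact ⟨c, List.mem_cons_of_mem _ hc, by rw [List.foldr_cons, h1, h]⟩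

/-- For an increasing tree with nonempty children, `maxLeaf` is attained at a child. -/
lemma maxLeaf_attained {x : ℝ} {ts : List RTree} (hne : ts ≠ [])
    (hinc : ∀ c ∈ ts, x < rootVal c) :
    ∃ c ∈ ts, maxLeaf (node x ts) = maxLeaf c := by
  rw [maxLeaf_node]
  rcases foldr_max_cases x ts with h | h
  · exfalso
    obtain ⟨c, hc⟩ := List.exists_mem_of_ne_nil ts hne
    have h1 := ((hinc c hc).trans_le (rootVal_le_maxLeaf c)).trans_le (mem_le_foldr_max hc x)
    rw [h] at h1
    exact lt_irrefl x h1
  · exact h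

lemma maxLeaf_node_singleton {x : ℝ} {c : RTree} (h : x ≤ maxLeaf c) :
    maxLeaf (node x [c]) = maxLeaf c := by
  rw [maxLeaf_node]; simp [max_eq_left h]

lemma maxLeaf_perm {x : ℝ} {ts ts' : List RTree} (h : ts.Perm ts') :
    maxLeaf (node x ts) = maxLeaf (node x ts') := by
  rw [maxLeaf_node, maxLeaf_node]
  exact List.Perm.foldr_eq (f := fun c m => max (maxLeaf c) m)
    (lcomm := ⟨fun a b m => max_left_comm _ _ _⟩) h x

lemma tmdAux_node (x : ℝ) (ts : List RTree) :
    tmdAux (node x ts) =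
      (↑(ts.map fun c => (x, maxLeaf c)) - {(x, maxLeaf (node x ts))})
        + (ts.map tmdAux).sum := by
  rw [tmdAux]
  congr 1
  conv_rhs => rw [← List.attach_map_subtype_val ts, List.map_map]
  rfl

end RTree

namespace RTree

lemma cons_sub_singleton_of_mem {α : Type*} [DecidableEq α] {b : α} {m : Multiset α} (a : α)
    (h : b ∈ m) : (a ::ₘ m) - {b} = a ::ₘ (m - {b}) := by
  rw [Multiset.sub_singleton, Multiset.sub_singleton]
  by_cases hab : a = b
  · subst hab; rw [Multiset.erase_cons_head, Multiset.cons_erase h]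
  · rw [Multiset.erase_cons_tail]
    exact fun hh => hab hh

lemma tmd_node_singleton {x : ℝ} {c : RTree} (h : x ≤ maxLeaf c) :
    tmd (node x [c]) = (x, maxLeaf c) ::ₘ tmdAux c := by
  rw [tmd, tmdAux_node, maxLeaf_node_singleton h]
  simp [rootVal]

lemma tmdAux_eq_zero {u : RTree} (hn : NoBranch u) (hi : Increasing u) : tmdAux u = 0 := by
  induction hn with
  | @node x ts hlen hnb ih =>
    cases hi with
    | node hlt hinc =>
      match ts, hlen with
      | [], _ => simp [tmdAux_node]
      | [c], _ =>
        have hx : x ≤ maxLeaf c :=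
          le_of_lt ((hlt c (List.mem_singleton_self c)).trans_le (rootVal_le_maxLeaf c))
        rw [tmdAux_node, maxLeaf_node_singleton hx]
        simp [ih c (List.mem_singleton_self c) (hinc c (List.mem_singleton_self c))]

lemma detach_spec {a b d : RTree} (h : Detach a b d) (ha : Increasing a) :
    Increasing b ∧ Increasing d ∧ rootVal b = rootVal a ∧ maxLeaf b = maxLeaf a ∧
    tmdAux a = tmdAux b + tmd d := by
  induction h with
  | @here x ts c hc h2 hmax =>
    cases ha with
    | node hlt hinc =>
      have hperm : ts.Perm (c :: ts.erase c) := List.perm_cons_erase hc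
      have hsub : ∀ u ∈ ts.erase c, u ∈ ts := fun u hu => List.erase_subset hu
      -- maxLeaf equality
      have hxc : x ≤ maxLeaf c := le_of_lt ((hlt c hc).trans_le (rootVal_le_maxLeaf c))
      obtain ⟨c', hc', hcc'⟩ := hmax
      have hml : maxLeaf (node x ts) = maxLeaf (node x (ts.erase c)) := by
        rw [maxLeaf_perm hperm, maxLeaf_node, maxLeaf_node, List.foldr_cons]
        exact max_eq_right (hcc'.trans (mem_le_foldr_max hc' x))
      -- erase is nonempty
      have hne : ts.erase c ≠ [] := by
        have := List.length_erase_of_mem hc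
        intro hcon
        rw [hcon] at this
        simp at this
        omega
      have hattain : ∃ c'' ∈ ts.erase c, maxLeaf (node x (ts.erase c)) = maxLeaf c'' :=
        maxLeaf_attained hne (fun u hu => hlt u (hsub u hu))
      obtain ⟨c'', hc'', hml''⟩ := hattain
      have hmem : (x, maxLeaf (node x (ts.erase c))) ∈
          ((ts.erase c).map fun u => (x, maxLeaf u) : Multiset (ℝ × ℝ)) := by
        rw [hml'']
        exact Multiset.mem_coe.2 (List.mem_map_of_mem hc'')
      refine ⟨Increasing.node (fun u hu => hlt u (hsub u hu)) (fun u hu => hinc u (hsub u hu)),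
        Increasing.node (by simpa using hlt c hc) (by simpa using hinc c hc), rfl, hml.symm, ?_⟩
      rw [tmdAux_node, tmdAux_node, tmd_node_singleton hxc, hml]
      have hperm2 : (ts.map fun u => (x, maxLeaf u)).Perm
          ((c :: ts.erase c).map fun u => (x, maxLeaf u)) := hperm.map _
      rw [Multiset.coe_eq_coe.2 hperm2, (hperm.map tmdAux).sum_eq]
      simp only [List.map_cons, ← Multiset.cons_coe, List.sum_cons]
      rw [cons_sub_singleton_of_mem _ hmem]
      generalize (↑(List.map (fun u => (x, maxLeaf u)) (ts.erase c)) -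
        {(x, maxLeaf (node x (ts.erase c)))} : Multiset (ℝ × ℝ)) = A
      simp only [Multiset.cons_add, ← Multiset.singleton_add]
      abel
  | @within x ts c c' d hc hd ih =>
    cases ha with
    | node hlt hinc =>
      obtain ⟨ib, id, hroot, hml, haux⟩ := ih (hinc c hc)
      have hperm : ts.Perm (c :: ts.erase c) := List.perm_cons_erase hc
      have hsub : ∀ u ∈ ts.erase c, u ∈ ts := fun u hu => List.erase_subset hu
      have hlt' : ∀ u ∈ c' :: ts.erase c, x < rootVal u := by
        intro u hu
        rcases List.mem_cons.1 hu with rfl | hu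
        · rw [hroot]; exact hlt c hc
        · exact hlt u (hsub u hu)
      have hml2 : maxLeaf (node x (c' :: ts.erase c)) = maxLeaf (node x ts) := by
        rw [maxLeaf_perm hperm, maxLeaf_node, maxLeaf_node, List.foldr_cons, List.foldr_cons, hml]
      refine ⟨Increasing.node hlt' (by
          intro u hu
          rcases List.mem_cons.1 hu with rfl | hu
          · exact ib
          · exact hinc u (hsub u hu)), id, rfl, hml2, ?_⟩
      rw [tmdAux_node, tmdAux_node, hml2]
      have hlperm : (ts.map fun u => (x, maxLeaf u)).Perm
          ((c' :: ts.erase c).map fun u => (x, maxLeaf u)) := by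
        refine (hperm.map _).trans ?_
        simp only [List.map_cons, hml]
        exact List.Perm.refl _
      rw [Multiset.coe_eq_coe.2 hlperm, (hperm.map tmdAux).sum_eq]
      simp only [List.map_cons, List.sum_cons, haux]
      generalize (↑((x, maxLeaf c') :: List.map (fun u => (x, maxLeaf u)) (ts.erase c)) -
        {(x, maxLeaf (node x ts))} : Multiset (ℝ × ℝ)) = A
      abel

lemma detach_tmd {a b d : RTree} (h : Detach a b d) (ha : Increasing a) :
    tmd a = tmd b + tmd d ∧ Increasing b ∧ Increasing d := by
  obtain ⟨ib, id, hroot, hml, haux⟩ := detach_spec h ha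
  refine ⟨?_, ib, id⟩
  rw [tmd, tmd, haux, hroot, hml]
  rw [Multiset.cons_add]

lemma reaches_invariant {S S' : Multiset RTree} (h : Reaches S S')
    (hinc : ∀ u ∈ S, Increasing u) :
    (∀ u ∈ S', Increasing u) ∧ (S'.map tmd).sum = (S.map tmd).sum := by
  induction h with
  | refl S => exact ⟨hinc, rfl⟩
  | @step S S' S'' hstep _ ih =>
    cases hstep with
    | @mk T T' d S0 hdet =>
      have hT : Increasing T := hinc T (Multiset.mem_cons_self T S0)
      obtain ⟨heq, ib, id⟩ := detach_tmd hdet hT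
      have hinc' : ∀ u ∈ T' ::ₘ d ::ₘ S0, Increasing u := by
        intro u hu
        rcases Multiset.mem_cons.1 hu with rfl | hu
        · exact ib
        rcases Multiset.mem_cons.1 hu with rfl | hu
        · exact id
        · exact hinc u (Multiset.mem_cons_of_mem hu)
      obtain ⟨h1, h2⟩ := ih hinc'
      refine ⟨h1, h2.trans ?_⟩
      simp only [Multiset.map_cons, Multiset.sum_cons, heq]
      abel

lemma runOutput_eq_tmd {T : RTree} (hT : Increasing T) {B : Multiset (ℝ × ℝ)}
    (hB : RunOutput T B) : B = tmd T := by
  obtain ⟨S, hreach, hnb, rfl⟩ := hB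
  obtain ⟨hincS, hsum⟩ := reaches_invariant hreach (by
    intro u hu; rw [Multiset.mem_singleton.1 hu]; exact hT)
  have hts : ∀ u ∈ S, tmd u = {(rootVal u, maxLeaf u)} := by
    intro u hu
    rw [tmd, tmdAux_eq_zero (hnb u hu) (hincS u hu)]
    rfl
  calc (S.map fun u => (rootVal u, maxLeaf u)) 
      = ((S.map fun u => (rootVal u, maxLeaf u)).map fun a => ({a} : Multiset (ℝ × ℝ))).sum := by
        rw [Multiset.sum_map_singleton]
    _ = (S.map tmd).sum := by
        rw [Multiset.map_map]
        congr 1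
        exact (Multiset.map_congr rfl (fun u hu => (hts u hu).symm))
    _ = tmd T := by simpa using hsum

end RTree

open RTree in
/-- for `f` strictly increasing along edges away from the root,
the output of the TMD algorithm does not depend on the order in which branch
points are processed, nor on tie-breaking choices: any two complete runs of the
algorithm on `T` produce the same multiset of intervals. -/
theorem tmd_order_independent (T : RTree) (hT : Increasing T)
    (B B' : Multiset (ℝ × ℝ)) (hB : RunOutput T B) (hB' : RunOutput T B') :
    B = B' := by
  rw [runOutput_eq_tmd hT hB, runOutput_eq_tmd hT hB']
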